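/- arXiv:2303.16167 — 3 statements merged into one kernel-verified Lean document; each statement's English description precedes it below -/
import Mathlib

section
/- Reduction of the forced transport equation to the homogeneous one: let α>0, let η̄₀:[0,∞)→ℝ be continuous, and let Ω:[0,T]×[0,∞)×[0,2π]→ℝ be a C¹ function, continuous and compactly supported in (R,β) for each t, satisfying ∂_tΩ + (ℒ(Ω)/2α) sin(2β) ∂_βΩ = η̄₀(R) exp((1/2α)∫₀ᵗ ℒ(Ω(τ))(R) dτ). Define g(t,R,β) := Ω(t,R,β) − η̄₀(R) ∫₀ᵗ exp((1/2α)∫₀^τ ℒ(Ω(μ))(R) dμ) dτ. Then ℒ(Ω(t)) = ℒ(g(t)) for every t, and g solves the homogeneous equation ∂_tg + (ℒ(g)/2α) sin(2β) ∂_βg = 0 with g(0)=Ω(0). -/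
/-!
Along the ray `β = 0` we have `sin (2β) = 0`, so the equation reduces to
`∂ₜΩ(t, R, 0) = η̄₀(R) exp(…)`: the forcing term subtracted in `g` is exactly the increment
`Ω(t, R, 0) − Ω(0, R, 0)`. Hence `g` differs from `Ω` by a function of `(t, R)` alone, which `ℒ`
does not see and `∂_β` kills, while `∂ₜ` of it cancels the right-hand side.
-/

open MeasureTheory Set Real

noncomputable section

/-- the integral operator `ℒ(Ω)(R) = (1/π) ∫_R^∞ ∫₀^{2π} Ω(s,β) sin(2β)/s dβ ds` -/
def Lop (Ω : ℝ → ℝ → ℝ) (R : ℝ) : ℝ :=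
  (1 / π) * ∫ s in Ioi R, (∫ β in (0:ℝ)..(2 * π), Ω s β * Real.sin (2 * β)) / s

/-- the reduced unknown
`g(t,R,β) = Ω(t,R,β) − η̄₀(R) ∫₀ᵗ exp((1/2α) ∫₀^τ ℒ(Ω(μ))(R) dμ) dτ` -/
def gRed (α : ℝ) (η₀ : ℝ → ℝ) (Ω : ℝ → ℝ → ℝ → ℝ) (t R β : ℝ) : ℝ :=
  Ω t R β -
    η₀ R * ∫ τ in (0:ℝ)..t, Real.exp ((1 / (2 * α)) * ∫ μ in (0:ℝ)..τ, Lop (Ω μ) R)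

theorem integral_sin_two_mul_zero_two_pi : ∫ β in (0:ℝ)..(2 * π), sin (2 * β) = 0 := by
  have hcos : cos (2 * (2 * π)) = 1 := by
    rw [show (2:ℝ) * (2 * π) = (2:ℤ) * (2 * π) by norm_num, cos_int_mul_two_pi]
  rw [intervalIntegral.integral_comp_mul_left sin two_ne_zero]
  norm_num [integral_sin, hcos]

theorem Lop_sub_radial (Ω : ℝ → ℝ → ℝ) (K : ℝ → ℝ)
    (hΩ : ∀ s, IntervalIntegrable (fun β => Ω s β * sin (2 * β)) volume 0 (2 * π)) (R : ℝ) :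
    Lop (fun s β => Ω s β - K s) R = Lop Ω R := by
  have hinner : ∀ s, ∫ β in (0:ℝ)..(2 * π), (Ω s β - K s) * sin (2 * β)
      = ∫ β in (0:ℝ)..(2 * π), Ω s β * sin (2 * β) := fun s => by
    have hK : IntervalIntegrable (fun β => K s * sin (2 * β)) volume 0 (2 * π) :=
      (continuous_const.mul (continuous_sin.comp (continuous_const_mul 2))).intervalIntegrable _ _
    simp only [sub_mul]
    rw [intervalIntegral.integral_sub (hΩ s) hK, intervalIntegral.integral_const_mul,
      integral_sin_two_mul_zero_two_pi, mul_zero, sub_zero]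
  simp only [Lop, hinner]

theorem integral_eq_sub_of_derivWithin_Icc {f f' : ℝ → ℝ} {a b u : ℝ} (hf : ContDiff ℝ 1 f)
    (hf' : ∀ t ∈ Icc a b, derivWithin f (Icc a b) t = f' t) (hu : u ∈ Icc a b) :
    ∫ t in a..u, f' t = f u - f a := by
  rcases hu.1.eq_or_lt with rfl | hau
  · simp
  have hderiv : EqOn f' (deriv f) (uIcc a u) := fun t ht => by
    rw [uIcc_of_le hau.le] at ht
    have ht' : t ∈ Icc a b := ⟨ht.1, ht.2.trans hu.2⟩
    rw [← hf' t ht', (hf.differentiable one_ne_zero t).derivWithin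
      (uniqueDiffOn_Icc (hau.trans_le hu.2) t ht')]
  rw [intervalIntegral.integral_congr hderiv]
  exact intervalIntegral.integral_deriv_eq_sub (fun t _ => hf.differentiable one_ne_zero t)
    ((hf.continuous_deriv le_rfl).intervalIntegrable _ _)

theorem gRed_eq_sub_increment {α T : ℝ} {η₀ : ℝ → ℝ} {Ω : ℝ → ℝ → ℝ → ℝ} {R : ℝ}
    (hΩ : ContDiff ℝ 1 fun t => Ω t R 0)
    (hforcing : ∀ t ∈ Icc (0:ℝ) T, derivWithin (fun t' => Ω t' R 0) (Icc 0 T) t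
      = η₀ R * exp ((1 / (2 * α)) * ∫ τ in (0:ℝ)..t, Lop (Ω τ) R))
    {t : ℝ} (ht : t ∈ Icc (0:ℝ) T) (β : ℝ) :
    gRed α η₀ Ω t R β = Ω t R β - (Ω t R 0 - Ω 0 R 0) := by
  rw [gRed, ← intervalIntegral.integral_const_mul,
    integral_eq_sub_of_derivWithin_Icc hΩ hforcing ht]

theorem reduction_to_homogeneous_equation_general
    (α T : ℝ)
    (η₀ : ℝ → ℝ)
    (Ω : ℝ → ℝ → ℝ → ℝ)
    (hC1 : ContDiff ℝ 1 (fun p : ℝ × ℝ × ℝ => Ω p.1 p.2.1 p.2.2))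
    (hcont : ∀ t, Continuous fun p : ℝ × ℝ => Ω t p.1 p.2)
    (hPDE : ∀ t ∈ Icc (0:ℝ) T, ∀ R β : ℝ,
      derivWithin (fun t' => Ω t' R β) (Icc 0 T) t
          + Lop (Ω t) R / (2 * α) * Real.sin (2 * β) * deriv (fun b => Ω t R b) β
        = η₀ R * Real.exp ((1 / (2 * α)) * ∫ τ in (0:ℝ)..t, Lop (Ω τ) R)) :
    (∀ t ∈ Icc (0:ℝ) T, ∀ R : ℝ,
      Lop (fun R' β' => gRed α η₀ Ω t R' β') R = Lop (Ω t) R) ∧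
    (∀ R β : ℝ, gRed α η₀ Ω 0 R β = Ω 0 R β) ∧
    (∀ t ∈ Icc (0:ℝ) T, ∀ R β : ℝ,
      derivWithin (fun t' => gRed α η₀ Ω t' R β) (Icc 0 T) t
          + Lop (fun R' β' => gRed α η₀ Ω t R' β') R / (2 * α) * Real.sin (2 * β)
            * deriv (fun b => gRed α η₀ Ω t R b) β
        = 0) := by
  have hslice : ∀ R β, ContDiff ℝ 1 fun t => Ω t R β :=
    fun R β => hC1.comp (contDiff_id.prodMk (contDiff_const (c := (R, β))))
  have hforcing : ∀ R, ∀ t ∈ Icc (0:ℝ) T, derivWithin (fun t' => Ω t' R 0) (Icc 0 T) t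
      = η₀ R * exp ((1 / (2 * α)) * ∫ τ in (0:ℝ)..t, Lop (Ω τ) R) :=
    fun R t ht => by simpa using hPDE t ht R 0
  have hLop : ∀ t R, Lop (fun R' β' => gRed α η₀ Ω t R' β') R = Lop (Ω t) R := fun t =>
    Lop_sub_radial (Ω t) _ fun s =>
      (((hcont t).comp (continuous_const.prodMk continuous_id)).mul
        (continuous_sin.comp (continuous_const_mul 2))).intervalIntegrable _ _
  refine ⟨fun t _ R => hLop t R, fun R β => by simp [gRed], fun t ht R β => ?_⟩
  have hdt : derivWithin (fun t' => gRed α η₀ Ω t' R β) (Icc 0 T) t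
      = derivWithin (fun t' => Ω t' R β) (Icc 0 T) t
        - derivWithin (fun t' => Ω t' R 0) (Icc 0 T) t := by
    rw [derivWithin_congr (fun t' ht' => gRed_eq_sub_increment (hslice R 0) (hforcing R) ht' β)
      (gRed_eq_sub_increment (hslice R 0) (hforcing R) ht β)]
    have hdiff : ∀ β', DifferentiableWithinAt ℝ (fun t' => Ω t' R β') (Icc 0 T) t :=
      fun β' => ((hslice R β').differentiable one_ne_zero t).differentiableWithinAt
    rw [derivWithin_fun_sub (hdiff β) ((hdiff 0).sub_const _), derivWithin_sub_const]
  have hdβ : deriv (fun b => gRed α η₀ Ω t R b) β = deriv (fun b => Ω t R b) β :=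
    deriv_sub_const _
  rw [hLop, hdt, hdβ, hforcing R t ht]
  linarith [hPDE t ht R β]

/-- **Reduction of the forced transport equation to the homogeneous one.**
If `Ω` is a `C¹` solution, continuous and compactly supported in `(R,β)` for each `t`,
of `∂_tΩ + (ℒ(Ω)/2α) sin(2β) ∂_βΩ = η̄₀(R) exp((1/2α)∫₀ᵗℒ(Ω(τ))(R)dτ)`, then
`ℒ(Ω(t)) = ℒ(g(t))` and `g` solves the homogeneous equation
`∂_tg + (ℒ(g)/2α) sin(2β) ∂_βg = 0` with `g(0) = Ω(0)`. -/
theorem reduction_to_homogeneous_equation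
    (α T : ℝ) (hα : 0 < α) (hT : 0 ≤ T)
    (η₀ : ℝ → ℝ) (hη₀ : Continuous η₀)
    (Ω : ℝ → ℝ → ℝ → ℝ)
    (hC1 : ContDiff ℝ 1 (fun p : ℝ × ℝ × ℝ => Ω p.1 p.2.1 p.2.2))
    (hcont : ∀ t, Continuous fun p : ℝ × ℝ => Ω t p.1 p.2)
    (hsupp : ∀ t, HasCompactSupport fun p : ℝ × ℝ => Ω t p.1 p.2)
    (hPDE : ∀ t ∈ Icc (0:ℝ) T, ∀ R β : ℝ,
      derivWithin (fun t' => Ω t' R β) (Icc 0 T) t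
          + Lop (Ω t) R / (2 * α) * Real.sin (2 * β) * deriv (fun b => Ω t R b) β
        = η₀ R * Real.exp ((1 / (2 * α)) * ∫ τ in (0:ℝ)..t, Lop (Ω τ) R)) :
    (∀ t ∈ Icc (0:ℝ) T, ∀ R : ℝ,
      Lop (fun R' β' => gRed α η₀ Ω t R' β') R = Lop (Ω t) R) ∧
    (∀ R β : ℝ, gRed α η₀ Ω 0 R β = Ω 0 R β) ∧
    (∀ t ∈ Icc (0:ℝ) T, ∀ R β : ℝ,
      derivWithin (fun t' => gRed α η₀ Ω t' R β) (Icc 0 T) t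
          + Lop (fun R' β' => gRed α η₀ Ω t R' β') R / (2 * α) * Real.sin (2 * β)
            * deriv (fun b => gRed α η₀ Ω t R b) β
        = 0) :=
  reduction_to_homogeneous_equation_general α T η₀ Ω hC1 hcont hPDE
end
end

section
/- The explicit stream-function solves the radial elliptic ODE: let α>0 and let f:(0,∞)→ℝ be continuous and compactly supported in (0,∞). Define ψ(R) = (1/(4α)) ∫_R^∞ f(s)/s ds + (1/(4α)) R^{−4/α} ∫₀^R s^{4/α−1} f(s) ds for R>0. Then ψ is twice differentiable on (0,∞) and satisfies α² R² ψ''(R) + (4α+α²) R ψ'(R) = −f(R) for all R>0. Equivalently, Ψ₂(R,β) := ψ(R) sin(2β) solves α²R²∂_{RR}Ψ₂ + (4α+α²)R∂_RΨ₂ = −Ω₂ with Ω₂(R,β)=f(R)sin(2β). -/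
open MeasureTheory Set Real

noncomputable section

/-- mixed iterated partial derivative `∂₁^i ∂₂^j f` -/
def pdMix (i j : ℕ) (f : ℝ → ℝ → ℝ) (x y : ℝ) : ℝ :=
  iteratedDeriv i (fun x' => iteratedDeriv j (fun y' => f x' y') y) x

/-- the explicit radial stream function
`ψ(R) = (1/(4α)) ∫_R^∞ f(s)/s ds + (1/(4α)) R^{−4/α} ∫₀^R s^{4/α−1} f(s) ds` -/
def psiExp (α : ℝ) (f : ℝ → ℝ) (R : ℝ) : ℝ :=
  (1 / (4 * α)) * (∫ s in Ioi R, f s / s)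
    + (1 / (4 * α)) * R ^ (-(4 / α)) * ∫ s in Ioc (0:ℝ) R, s ^ (4 / α - 1) * f s

/-- support bound: `f` vanishes below some positive `ε` -/
lemma aux_eps (f : ℝ → ℝ) (hsupp : HasCompactSupport f) (hsupp' : tsupport f ⊆ Ioi 0) :
    ∃ ε > (0:ℝ), ∀ s < ε, f s = 0 := by
  rcases eq_empty_or_nonempty (tsupport f) with h | h
  · exact ⟨1, one_pos, fun s _ => image_eq_zero_of_notMem_tsupport (by simp [h])⟩
  · refine ⟨sInf (tsupport f), hsupp' (hsupp.sInf_mem h), fun s hs =>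
      image_eq_zero_of_notMem_tsupport fun hmem => ?_⟩
    exact absurd (csInf_le hsupp.bddBelow hmem) (not_le.2 hs)

/-- derivative of `r ↦ ∫_{Ioi r} g` for integrable continuous `g` -/
lemma hasDerivAt_int_Ioi (g : ℝ → ℝ) (hg : Continuous g) (hgi : Integrable g)
    {R : ℝ} (hR : 0 < R) :
    HasDerivAt (fun r => ∫ s in Ioi r, g s) (-(g R)) R := by
  have ha : R / 2 < R := by linarith
  have key : ∀ r, R / 2 < r →
      (∫ s in Ioi r, g s) = (∫ s in Ioi (R/2), g s) - ∫ s in (R/2)..r, g s := by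
    intro r hr
    rw [intervalIntegral.integral_of_le hr.le]
    have hsplit := setIntegral_union (f := g) (μ := volume) (s := Ioc (R/2) r) (t := Ioi r)
      Ioc_disjoint_Ioi_same measurableSet_Ioi hgi.integrableOn hgi.integrableOn
    rw [Ioc_union_Ioi_eq_Ioi hr.le] at hsplit
    linarith [hsplit]
  have hD : HasDerivAt (fun r => (∫ s in Ioi (R/2), g s) - ∫ s in (R/2)..r, g s)
      (-(g R)) R := by
    have := intervalIntegral.integral_hasDerivAt_right (f := g) (a := R/2) (b := R)
      hgi.intervalIntegrable (hg.stronglyMeasurableAtFilter _ _) hg.continuousAt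
    simpa using this.const_sub _
  exact hD.congr_of_eventuallyEq
    (Filter.eventuallyEq_of_mem (Ioi_mem_nhds ha) fun r hr => key r hr)

/-- **The explicit stream-function solves the radial elliptic ODE:**
`α²R²ψ'' + (4α+α²)Rψ' = −f` on `(0,∞)`; equivalently `Ψ₂(R,β) = ψ(R) sin(2β)`
solves `α²R²∂_{RR}Ψ₂ + (4α+α²)R∂_RΨ₂ = −Ω₂` with `Ω₂(R,β) = f(R) sin(2β)`. -/
theorem explicit_stream_function_solves_elliptic_ode
    (α : ℝ) (hα : 0 < α) (f : ℝ → ℝ)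
    (hf : Continuous f) (hsupp : HasCompactSupport f) (hsupp' : tsupport f ⊆ Ioi 0) :
    ∀ R : ℝ, 0 < R →
      DifferentiableAt ℝ (psiExp α f) R ∧
      DifferentiableAt ℝ (deriv (psiExp α f)) R ∧
      α ^ 2 * R ^ 2 * deriv (deriv (psiExp α f)) R
          + (4 * α + α ^ 2) * R * deriv (psiExp α f) R = -f R ∧
      ∀ β : ℝ,
        α ^ 2 * R ^ 2 * pdMix 2 0 (fun R' β' => psiExp α f R' * Real.sin (2 * β')) R β
            + (4 * α + α ^ 2) * R *
                pdMix 1 0 (fun R' β' => psiExp α f R' * Real.sin (2 * β')) R β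
          = -(f R * Real.sin (2 * β)) := by
  obtain ⟨ε, hε0, hε⟩ := aux_eps f hsupp hsupp'
  -- the two integrand functions
  set g : ℝ → ℝ := fun s => f s / s with hg_def
  set h : ℝ → ℝ := fun s => s ^ (4 / α - 1) * f s with hh_def
  have hg : Continuous g := by
    rw [continuous_iff_continuousAt]
    intro s₀
    rcases le_or_gt ε s₀ with hs | hs
    · exact (hf.continuousAt).div continuousAt_id (lt_of_lt_of_le hε0 hs).ne'
    · have : g =ᶠ[nhds s₀] fun _ => 0 :=
        Filter.eventuallyEq_of_mem (Iio_mem_nhds hs) fun s hs' => by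
          simp [hg_def, hε s hs']
      exact (continuousAt_congr this).2 continuousAt_const
  have hh : Continuous h := by
    rw [continuous_iff_continuousAt]
    intro s₀
    rcases le_or_gt ε s₀ with hs | hs
    · exact (Real.continuousAt_rpow_const _ _ (Or.inl (lt_of_lt_of_le hε0 hs).ne')).mul
        hf.continuousAt
    · have : h =ᶠ[nhds s₀] fun _ => 0 :=
        Filter.eventuallyEq_of_mem (Iio_mem_nhds hs) fun s hs' => by
          simp [hh_def, hε s hs']
      exact (continuousAt_congr this).2 continuousAt_const
  have hgsupp : HasCompactSupport g :=
    hsupp.mono fun s hs => by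
      simp only [Function.mem_support] at hs ⊢
      intro h0; exact hs (by simp [hg_def, h0])
  have hhsupp : HasCompactSupport h :=
    hsupp.mono fun s hs => by
      simp only [Function.mem_support] at hs ⊢
      intro h0; exact hs (by simp [hh_def, h0])
  have hgi : Integrable g := hg.integrable_of_hasCompactSupport hgsupp
  have hhi : Integrable h := hh.integrable_of_hasCompactSupport hhsupp
  set G : ℝ → ℝ := fun r => ∫ s in Ioc (0:ℝ) r, h s with hG_def
  have hGeq : G = fun r => ∫ s in (0:ℝ)..r, h s := by
    funext r
    rcases le_or_gt 0 r with hr | hr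
    · rw [hG_def, intervalIntegral.integral_of_le hr]
    · have h1 : G r = 0 := by
        rw [hG_def]; simp [Ioc_eq_empty (not_lt.2 hr.le)]
      have h2 : (∫ s in Ioc r 0, h s) = 0 := by
        rw [setIntegral_congr_fun measurableSet_Ioc
          (fun s hs => show h s = 0 by simp [hh_def, hε s (lt_of_le_of_lt hs.2 hε0)])]
        simp
      rw [h1, intervalIntegral.integral_of_ge hr.le, h2, neg_zero]
  have hG : ∀ r : ℝ, 0 < r → HasDerivAt G (h r) r := by
    intro r hr
    rw [hGeq]
    exact intervalIntegral.integral_hasDerivAt_right hhi.intervalIntegrable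
      (hh.stronglyMeasurableAtFilter _ _) hh.continuousAt
  -- first derivative
  set D : ℝ → ℝ := fun r => -(α^2)⁻¹ * (r ^ (-(4/α) - 1) * G r) with hD_def
  have hpsi : ∀ r : ℝ, 0 < r → HasDerivAt (psiExp α f) (D r) r := by
    intro r hr
    have hF := hasDerivAt_int_Ioi g hg hgi hr
    have hrpow : HasDerivAt (fun x : ℝ => x ^ (-(4/α))) (-(4/α) * r ^ (-(4/α) - 1)) r :=
      Real.hasDerivAt_rpow_const (Or.inl hr.ne')
    have hB : HasDerivAt (fun x => 1 / (4*α) * x ^ (-(4/α)) * G x)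
        ((1 / (4*α) * (-(4/α) * r ^ (-(4/α) - 1))) * G r
          + (1 / (4*α) * r ^ (-(4/α))) * h r) r :=
      ((hrpow.const_mul (1/(4*α))).mul (hG r hr))
    have htot := (hF.const_mul (1/(4*α))).add hB
    have : HasDerivAt (psiExp α f)
        (1 / (4*α) * (-(g r))
          + ((1 / (4*α) * (-(4/α) * r ^ (-(4/α) - 1))) * G r
            + (1 / (4*α) * r ^ (-(4/α))) * h r)) r := htot
    convert this using 1
    have hcomb : r ^ (-(4/α)) * r ^ (4/α - 1) = r⁻¹ := by
      rw [← Real.rpow_add hr, show -(4/α) + (4/α - 1) = (-1 : ℝ) by ring,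
        Real.rpow_neg_one]
    rw [hD_def]
    simp only [hg_def, hh_def]
    rw [show 1 / (4*α) * r ^ (-(4/α)) * (r ^ (4/α - 1) * f r)
        = 1 / (4*α) * (r ^ (-(4/α)) * r ^ (4/α - 1)) * f r by ring, hcomb]
    generalize r ^ (-(4/α) - 1) = X
    field_simp
    ring
  -- second derivative
  set D2 : ℝ → ℝ := fun r => -(α^2)⁻¹ * (((-(4/α) - 1) * r ^ (-(4/α) - 1 - 1)) * G r
    + r ^ (-(4/α) - 1) * h r) with hD2_def
  have hD : ∀ r : ℝ, 0 < r → HasDerivAt D (D2 r) r := by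
    intro r hr
    have hrpow : HasDerivAt (fun x : ℝ => x ^ (-(4/α) - 1))
        ((-(4/α) - 1) * r ^ (-(4/α) - 1 - 1)) r :=
      Real.hasDerivAt_rpow_const (Or.inl hr.ne')
    exact (hrpow.mul (hG r hr)).const_mul _
  intro R hR
  have hmem : Ioi (0:ℝ) ∈ nhds R := Ioi_mem_nhds hR
  have hderiv_eq : deriv (psiExp α f) =ᶠ[nhds R] D :=
    Filter.eventuallyEq_of_mem hmem fun r hr => (hpsi r hr).deriv
  have hd1 : deriv (psiExp α f) R = D R := (hpsi R hR).deriv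
  have hd2 : deriv (deriv (psiExp α f)) R = D2 R := by
    rw [hderiv_eq.deriv_eq]; exact (hD R hR).deriv
  -- the scalar ODE
  have hQ : R ^ (-(4/α) - 1) = R ^ (-(4/α) - 1 - 1) * R := by
    have := Real.rpow_add_one hR.ne' (-(4/α) - 1 - 1)
    rw [show (-(4/α) - 1 - 1 + 1 : ℝ) = -(4/α) - 1 by ring] at this
    exact this
  have hQR : R ^ (-(4/α) - 1) * R ^ (4/α - 1) = (R ^ 2)⁻¹ := by
    rw [← Real.rpow_add hR, show (-(4/α) - 1) + (4/α - 1) = (-2 : ℝ) by ring,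
      show (-2 : ℝ) = -(2:ℝ) by norm_num, Real.rpow_neg hR.le, Real.rpow_two, sq]
  have hODE : α ^ 2 * R ^ 2 * D2 R + (4 * α + α ^ 2) * R * D R = -f R := by
    rw [hD_def, hD2_def]
    simp only [hh_def]
    rw [show R ^ (-(4/α) - 1) * (R ^ (4/α - 1) * f R)
        = R ^ (-(4/α) - 1) * R ^ (4/α - 1) * f R by ring, hQR, hQ]
    generalize R ^ (-(4/α) - 1 - 1) = P
    have hR2 : (R:ℝ) ^ 2 ≠ 0 := by positivity
    field_simp
    ring
  refine ⟨(hpsi R hR).differentiableAt, ?_, ?_, ?_⟩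
  · exact (hderiv_eq.differentiableAt_iff).2 (hD R hR).differentiableAt
  · rw [hd1, hd2]; exact hODE
  · intro β
    have hpd1 : pdMix 1 0 (fun R' β' => psiExp α f R' * Real.sin (2 * β')) R β
        = D R * Real.sin (2 * β) := by
      simp only [pdMix, iteratedDeriv_zero, iteratedDeriv_one]
      exact ((hpsi R hR).mul_const _).deriv
    have hpd2 : pdMix 2 0 (fun R' β' => psiExp α f R' * Real.sin (2 * β')) R β
        = D2 R * Real.sin (2 * β) := by
      simp only [pdMix, iteratedDeriv_zero]
      have e1 : deriv (fun x => psiExp α f x * Real.sin (2 * β))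
          =ᶠ[nhds R] fun x => D x * Real.sin (2 * β) :=
        Filter.eventuallyEq_of_mem hmem fun r hr => ((hpsi r hr).mul_const _).deriv
      rw [show (2:ℕ) = 1 + 1 from rfl, iteratedDeriv_succ, iteratedDeriv_one, e1.deriv_eq]
      exact ((hD R hR).mul_const _).deriv
    rw [hpd1, hpd2]
    linear_combination Real.sin (2 * β) * hODE
end
end

section
/- Key cancellation and elliptic estimates for the singular part of the stream function: let α∈(0,1] and let f:(0,∞)→ℝ be continuous and compactly supported in (0,∞); let ψ(R) = (1/(4α)) ∫_R^∞ f(s)/s ds + (1/(4α)) R^{−4/α} ∫₀^R s^{4/α−1} f(s) ds. Then (i) ψ'(R) = −(1/α²) R^{−4/α−1} ∫₀^R s^{4/α−1} f(s) ds (the derivatives of the two summands cancel at leading order), and (ii) there is an absolute constant C>0, independent of α, such that α‖Rψ'‖_{L²(0,∞)} ≤ C‖f‖_{L²(0,∞)} and α²‖R²ψ''‖_{L²(0,∞)} ≤ C‖f‖_{L²(0,∞)}. -/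
/-!
Write `H f (R) = R^{-b} ∫₀^R s^{b-1} f(s) ds` (`hardyOp b f R`) with `b = 4/α`. Then
`ψ = (1/(4α)) (∫_R^∞ f(s)/s ds + H f)` and `(H f)' = (f - b H f)/R`, so the two `f/R` terms
cancel: `R ψ' = -(1/α²) H f` and `R² ψ'' = (1/α²) ((b + 1) H f - f)`. Both estimates then
reduce to Hardy's inequality `‖H f‖_{L²(0,∞)} ≤ ‖f‖_{L²(0,∞)} / (b - 1/2)`, which follows from
Cauchy–Schwarz on `(0, R]` against the weight `s^{b-3/2}` and Tonelli on `{0 < s ≤ R}`.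
-/

open MeasureTheory Set Real
open scoped ENNReal

noncomputable section

theorem sq_lintegral_mul_le {X : Type*} [MeasurableSpace X] (μ : Measure X) {u v : X → ℝ≥0∞}
    (hu : AEMeasurable u μ) (hv : AEMeasurable v μ) :
    (∫⁻ x, u x * v x ∂μ) ^ 2 ≤ (∫⁻ x, u x ^ 2 ∂μ) * ∫⁻ x, v x ^ 2 ∂μ := by
  have h := ENNReal.lintegral_mul_le_Lp_mul_Lq μ Real.HolderConjugate.two_two hu hv
  simp only [ENNReal.rpow_two, Pi.mul_apply] at h
  calc (∫⁻ x, u x * v x ∂μ) ^ 2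
      ≤ ((∫⁻ x, u x ^ 2 ∂μ) ^ (1 / 2 : ℝ) * (∫⁻ x, v x ^ 2 ∂μ) ^ (1 / 2 : ℝ)) ^ 2 := by gcongr
    _ = (∫⁻ x, u x ^ 2 ∂μ) * ∫⁻ x, v x ^ 2 ∂μ := by
      rw [mul_pow, ← ENNReal.rpow_natCast, ← ENNReal.rpow_natCast (_ ^ _), ← ENNReal.rpow_mul,
        ← ENNReal.rpow_mul]
      norm_num

theorem eLpNorm_two_sq_eq_lintegral {X E : Type*} [MeasurableSpace X] [NormedAddCommGroup E]
    (g : X → E) (μ : Measure X) : eLpNorm g 2 μ ^ 2 = ∫⁻ x, ‖g x‖ₑ ^ 2 ∂μ := by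
  simpa using eLpNorm_nnreal_pow_eq_lintegral (f := g) (μ := μ) (p := 2) two_ne_zero

theorem sqrt_integral_sq_eq_toReal_eLpNorm {X : Type*} [MeasurableSpace X] {μ : Measure X}
    {g : X → ℝ} (hg : AEStronglyMeasurable g μ) :
    √(∫ x, g x ^ 2 ∂μ) = (eLpNorm g 2 μ).toReal := by
  rw [toReal_eLpNorm hg]
  simpa [Real.sqrt_eq_rpow] using (lpNorm_nnreal_eq_integral_norm_rpow (p := 2) two_ne_zero hg).symm

theorem sqrt_integral_sq_le_of_eLpNorm_le {X : Type*} [MeasurableSpace X] {μ : Measure X}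
    {g f : X → ℝ} {c : ℝ} (hc : 0 ≤ c) (hg : AEStronglyMeasurable g μ) (hf : MemLp f 2 μ)
    (h : eLpNorm g 2 μ ≤ ENNReal.ofReal c * eLpNorm f 2 μ) :
    √(∫ x, g x ^ 2 ∂μ) ≤ c * √(∫ x, f x ^ 2 ∂μ) := by
  rw [sqrt_integral_sq_eq_toReal_eLpNorm hg, sqrt_integral_sq_eq_toReal_eLpNorm hf.1,
    ← ENNReal.toReal_ofReal hc, ← ENNReal.toReal_mul]
  exact ENNReal.toReal_mono (ENNReal.mul_ne_top ENNReal.ofReal_ne_top hf.eLpNorm_ne_top) h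

theorem lintegral_Ioc_zero_rpow {a : ℝ} (ha : -1 < a) {R : ℝ} (hR : 0 ≤ R) :
    ∫⁻ s in Ioc 0 R, ENNReal.ofReal (s ^ a) = ENNReal.ofReal (R ^ (a + 1) / (a + 1)) := by
  rw [← ofReal_integral_eq_lintegral_ofReal (intervalIntegral.intervalIntegrable_rpow' ha).1
      ((ae_restrict_mem measurableSet_Ioc).mono fun s hs => rpow_nonneg hs.1.le a),
    ← intervalIntegral.integral_of_le hR, integral_rpow (Or.inl ha),
    zero_rpow (by linarith), sub_zero]

theorem lintegral_Ioi_rpow {a : ℝ} (ha : a < -1) {s : ℝ} (hs : 0 < s) :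
    ∫⁻ R in Ioi s, ENNReal.ofReal (R ^ a) = ENNReal.ofReal (-s ^ (a + 1) / (a + 1)) := by
  rw [← ofReal_integral_eq_lintegral_ofReal (integrableOn_Ioi_rpow_of_lt ha hs)
      ((ae_restrict_mem measurableSet_Ioi).mono fun R hR => rpow_nonneg (hs.trans hR).le a),
    integral_Ioi_rpow_of_lt ha hs]

theorem lintegral_Ioi_lintegral_Ioc_swap {F : ℝ → ℝ → ℝ≥0∞} (hF : Measurable (Function.uncurry F)) :
    ∫⁻ R in Ioi 0, ∫⁻ s in Ioc 0 R, F R s = ∫⁻ s in Ioi 0, ∫⁻ R in Ioi s, F R s := by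
  set T : Set (ℝ × ℝ) := {p | p.2 ≤ p.1}
  have hT : MeasurableSet T := measurableSet_le measurable_snd measurable_fst
  calc ∫⁻ R in Ioi 0, ∫⁻ s in Ioc 0 R, F R s
      = ∫⁻ R in Ioi 0, ∫⁻ s in Ioi 0, T.indicator (Function.uncurry F) (R, s) := by
        refine lintegral_congr fun R => ?_
        rw [← Iic_inter_Ioi, ← Measure.restrict_restrict measurableSet_Iic,
          ← lintegral_indicator measurableSet_Iic]
        rfl
    _ = ∫⁻ s in Ioi 0, ∫⁻ R in Ioi 0, T.indicator (Function.uncurry F) (R, s) :=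
        lintegral_lintegral_swap ((hF.indicator hT).aemeasurable)
    _ = ∫⁻ s in Ioi 0, ∫⁻ R in Ioi s, F R s := by
        refine setLIntegral_congr_fun measurableSet_Ioi fun s hs => ?_
        change ∫⁻ R in Ioi 0, (Ici s).indicator (fun R => F R s) R = _
        rw [lintegral_indicator measurableSet_Ici, Measure.restrict_restrict measurableSet_Ici,
          inter_eq_left.2 (Ici_subset_Ioi.2 hs), Measure.restrict_congr_set Ioi_ae_eq_Ici]

theorem integrableOn_rpow_mul_Ioc_zero {c : ℝ} (hc : -1 < c) {f : ℝ → ℝ} (hf : Continuous f)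
    (R : ℝ) : IntegrableOn (fun s => s ^ c * f s) (Ioc 0 R) :=
  (intervalIntegral.intervalIntegrable_rpow' hc).1.mul_continuousOn_of_subset hf.continuousOn
    measurableSet_Ioc isCompact_Icc Ioc_subset_Icc_self

theorem integrableOn_div_self_Ioi {f : ℝ → ℝ} {a : ℝ} (ha : 0 < a) (hf : IntegrableOn f (Ioi a)) :
    IntegrableOn (fun s => f s / s) (Ioi a) := by
  simp_rw [div_eq_inv_mul]
  refine hf.bdd_mul measurable_inv.aestronglyMeasurable (c := a⁻¹) ?_
  filter_upwards [ae_restrict_mem measurableSet_Ioi] with s hs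
  rw [norm_inv, Real.norm_of_nonneg (ha.trans hs).le]
  exact inv_anti₀ ha hs.le

theorem hasDerivAt_integral_Ioc_zero {g : ℝ → ℝ} {R c : ℝ} (hR : 0 < R) (hRc : R < c)
    (hg : IntegrableOn g (Ioc 0 c)) (hgR : ContinuousAt g R) :
    HasDerivAt (fun r => ∫ s in Ioc 0 r, g s) (g R) R := by
  have hmeas : StronglyMeasurableAtFilter g (nhds R) :=
    ⟨Ioo 0 c, Ioo_mem_nhds hR hRc, (hg.mono_set Ioo_subset_Ioc_self).aestronglyMeasurable⟩
  refine (intervalIntegral.integral_hasDerivAt_right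
    ((intervalIntegrable_iff_integrableOn_Ioc_of_le hR.le).2
      (hg.mono_set (Ioc_subset_Ioc_right hRc.le))) hmeas hgR).congr_of_eventuallyEq ?_
  filter_upwards [Ioi_mem_nhds hR] with r hr
  exact (intervalIntegral.integral_of_le (le_of_lt hr)).symm

theorem hasDerivAt_integral_Ioi {g : ℝ → ℝ} {a R : ℝ} (haR : a < R)
    (hg : IntegrableOn g (Ioi a)) (hgR : ContinuousAt g R) :
    HasDerivAt (fun r => ∫ s in Ioi r, g s) (-g R) R := by
  have hmeas : StronglyMeasurableAtFilter g (nhds R) :=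
    ⟨Ioi a, Ioi_mem_nhds haR, hg.aestronglyMeasurable⟩
  refine ((intervalIntegral.integral_hasDerivAt_right
    ((intervalIntegrable_iff_integrableOn_Ioc_of_le haR.le).2
      (hg.mono_set Ioc_subset_Ioi_self)) hmeas hgR).const_sub (∫ s in Ioi a, g s)
    ).congr_of_eventuallyEq ?_
  filter_upwards [Ioi_mem_nhds haR] with r hr
  exact eq_sub_of_add_eq' (intervalIntegral.integral_interval_add_Ioi hg
    (hg.mono_set (Ioi_subset_Ioi hr.le)))

def hardyOp (b : ℝ) (f : ℝ → ℝ) (R : ℝ) : ℝ :=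
  R ^ (-b) * ∫ s in Ioc 0 R, s ^ (b - 1) * f s

theorem measurable_hardyOp (b : ℝ) {f : ℝ → ℝ} (hf : Measurable f) : Measurable (hardyOp b f) := by
  set T : Set (ℝ × ℝ) := {p | 0 < p.2 ∧ p.2 ≤ p.1}
  have hT : MeasurableSet T :=
    (measurableSet_lt measurable_const measurable_snd).inter
      (measurableSet_le measurable_snd measurable_fst)
  have hint : (fun R => ∫ s in Ioc 0 R, s ^ (b - 1) * f s)
      = fun R => ∫ s, T.indicator (fun p => p.2 ^ (b - 1) * f p.2) (R, s) := by
    ext R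
    rw [← integral_indicator measurableSet_Ioc]
    rfl
  have hm : Measurable fun R => ∫ s in Ioc 0 R, s ^ (b - 1) * f s := by
    rw [hint]
    exact (((by fun_prop : Measurable fun p : ℝ × ℝ => p.2 ^ (b - 1) * f p.2).indicator hT
      ).stronglyMeasurable.integral_prod_right' (ν := volume)).measurable
  exact (measurable_id.pow_const _).mul hm

theorem enorm_hardyOp_sq_le {b : ℝ} (hb : 1 / 2 < b) {f : ℝ → ℝ} (hf : AEMeasurable f)
    {R : ℝ} (hR : 0 < R) :
    ‖hardyOp b f R‖ₑ ^ 2 ≤ ENNReal.ofReal (R ^ (-b - 1 / 2) / (b - 1 / 2)) *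
      ∫⁻ s in Ioc 0 R, ENNReal.ofReal (s ^ (b - 1 / 2)) * ‖f s‖ₑ ^ 2 := by
  set u : ℝ → ℝ≥0∞ := fun s => ENNReal.ofReal (s ^ (b / 2 - 3 / 4))
  set v : ℝ → ℝ≥0∞ := fun s => ENNReal.ofReal (s ^ (b / 2 - 1 / 4)) * ‖f s‖ₑ
  have hsplit : ∀ s ∈ Ioc 0 R, ‖s ^ (b - 1) * f s‖ₑ = u s * v s := fun s hs => by
    rw [enorm_mul, enorm_of_nonneg (rpow_nonneg hs.1.le _), ← mul_assoc,
      ← ENNReal.ofReal_mul (rpow_nonneg hs.1.le _), ← rpow_add hs.1]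
    ring_nf
  have hu : ∀ s ∈ Ioc 0 R, u s ^ 2 = ENNReal.ofReal (s ^ (b - 3 / 2)) := fun s hs => by
    rw [← ENNReal.ofReal_pow (rpow_nonneg hs.1.le _), ← rpow_natCast, ← rpow_mul hs.1.le]
    ring_nf
  have hv : ∀ s ∈ Ioc 0 R, v s ^ 2 = ENNReal.ofReal (s ^ (b - 1 / 2)) * ‖f s‖ₑ ^ 2 := fun s hs => by
    rw [mul_pow, ← ENNReal.ofReal_pow (rpow_nonneg hs.1.le _), ← rpow_natCast, ← rpow_mul hs.1.le]
    ring_nf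
  have hcs : ‖∫ s in Ioc 0 R, s ^ (b - 1) * f s‖ₑ ^ 2
      ≤ ENNReal.ofReal (R ^ (b - 1 / 2) / (b - 1 / 2)) *
        ∫⁻ s in Ioc 0 R, ENNReal.ofReal (s ^ (b - 1 / 2)) * ‖f s‖ₑ ^ 2 := by
    calc ‖∫ s in Ioc 0 R, s ^ (b - 1) * f s‖ₑ ^ 2
        ≤ (∫⁻ s in Ioc 0 R, u s * v s) ^ 2 := by
          gcongr
          exact (enorm_integral_le_lintegral_enorm _).trans_eq
            (setLIntegral_congr_fun measurableSet_Ioc hsplit)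
      _ ≤ (∫⁻ s in Ioc 0 R, u s ^ 2) * ∫⁻ s in Ioc 0 R, v s ^ 2 :=
          sq_lintegral_mul_le _ (by fun_prop) (by fun_prop)
      _ = _ := by
          rw [setLIntegral_congr_fun measurableSet_Ioc hu,
            setLIntegral_congr_fun measurableSet_Ioc hv,
            lintegral_Ioc_zero_rpow (by linarith) hR.le]
          ring_nf
  rw [hardyOp, enorm_mul, enorm_of_nonneg (rpow_nonneg hR.le _), mul_pow]
  calc ENNReal.ofReal (R ^ (-b)) ^ 2 * ‖∫ s in Ioc 0 R, s ^ (b - 1) * f s‖ₑ ^ 2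
      ≤ ENNReal.ofReal (R ^ (-b)) ^ 2 * (ENNReal.ofReal (R ^ (b - 1 / 2) / (b - 1 / 2)) *
        ∫⁻ s in Ioc 0 R, ENNReal.ofReal (s ^ (b - 1 / 2)) * ‖f s‖ₑ ^ 2) := by gcongr
    _ = _ := by
      rw [← mul_assoc, ← ENNReal.ofReal_pow (rpow_nonneg hR.le _),
        ← ENNReal.ofReal_mul (by positivity), ← rpow_natCast, ← rpow_mul hR.le, mul_div_assoc',
        ← rpow_add hR]
      ring_nf

theorem lintegral_enorm_hardyOp_sq_le {b : ℝ} (hb : 1 / 2 < b) {f : ℝ → ℝ} (hf : Measurable f) :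
    ∫⁻ R in Ioi 0, ‖hardyOp b f R‖ₑ ^ 2
      ≤ ENNReal.ofReal (1 / (b - 1 / 2)) ^ 2 * ∫⁻ s in Ioi 0, ‖f s‖ₑ ^ 2 := by
  have hb' : 0 < b - 1 / 2 := by linarith
  calc ∫⁻ R in Ioi 0, ‖hardyOp b f R‖ₑ ^ 2
      ≤ ∫⁻ R in Ioi 0, ∫⁻ s in Ioc 0 R,
          ENNReal.ofReal (R ^ (-b - 1 / 2) / (b - 1 / 2)) *
            (ENNReal.ofReal (s ^ (b - 1 / 2)) * ‖f s‖ₑ ^ 2) := by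
        refine setLIntegral_mono' measurableSet_Ioi fun R hR => ?_
        rw [lintegral_const_mul' _ _ ENNReal.ofReal_ne_top]
        exact enorm_hardyOp_sq_le hb hf.aemeasurable hR
    _ = ∫⁻ s in Ioi 0, ∫⁻ R in Ioi s,
          ENNReal.ofReal (R ^ (-b - 1 / 2) / (b - 1 / 2)) *
            (ENNReal.ofReal (s ^ (b - 1 / 2)) * ‖f s‖ₑ ^ 2) :=
        lintegral_Ioi_lintegral_Ioc_swap (by fun_prop)
    _ = ∫⁻ s in Ioi 0, ENNReal.ofReal (1 / (b - 1 / 2)) ^ 2 * ‖f s‖ₑ ^ 2 := by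
        refine setLIntegral_congr_fun measurableSet_Ioi fun s (hs : 0 < s) => ?_
        have hweight : ∫⁻ R in Ioi s, ENNReal.ofReal (R ^ (-b - 1 / 2) / (b - 1 / 2))
            = ENNReal.ofReal (s ^ (-(b - 1 / 2)) / (b - 1 / 2) ^ 2) := by
          simp_rw [div_eq_mul_inv (_ ^ _), ENNReal.ofReal_mul' (inv_nonneg.2 hb'.le)]
          rw [lintegral_mul_const' _ _ ENNReal.ofReal_ne_top, lintegral_Ioi_rpow (by linarith) hs,
            ← ENNReal.ofReal_mul' (inv_nonneg.2 hb'.le),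
            show -b - 1 / 2 + 1 = -(b - 1 / 2) by ring, neg_div_neg_eq]
          field_simp
        rw [lintegral_mul_const' _ _ (by finiteness), hweight, ← mul_assoc,
          ← ENNReal.ofReal_mul (by positivity), ← ENNReal.ofReal_pow (by positivity)]
        congr 2
        field_simp
        rw [← rpow_add hs, neg_add_cancel, rpow_zero]
    _ = _ := lintegral_const_mul' _ _ (by finiteness)

theorem eLpNorm_hardyOp_le {b : ℝ} (hb : 1 / 2 < b) {f : ℝ → ℝ} (hf : Measurable f) :
    eLpNorm (hardyOp b f) 2 (volume.restrict (Ioi 0))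
      ≤ ENNReal.ofReal (1 / (b - 1 / 2)) * eLpNorm f 2 (volume.restrict (Ioi 0)) := by
  rw [← ENNReal.pow_le_pow_left_iff two_ne_zero, mul_pow, eLpNorm_two_sq_eq_lintegral,
    eLpNorm_two_sq_eq_lintegral]
  exact lintegral_enorm_hardyOp_sq_le hb hf

theorem hasDerivAt_hardyOp {b : ℝ} (hb : 0 < b) {f : ℝ → ℝ} (hf : Continuous f) {R : ℝ}
    (hR : 0 < R) : HasDerivAt (hardyOp b f) ((f R - b * hardyOp b f R) / R) R := by
  have hG := hasDerivAt_integral_Ioc_zero hR (lt_add_one R)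
    (integrableOn_rpow_mul_Ioc_zero (by linarith) hf _)
    ((continuousAt_rpow_const R (b - 1) (Or.inl hR.ne')).mul hf.continuousAt)
  refine ((hasDerivAt_rpow_const (p := -b) (Or.inl hR.ne')).fun_mul hG).congr_deriv ?_
  rw [hardyOp, rpow_sub_one hR.ne', ← mul_assoc, ← rpow_add hR,
    show -b + (b - 1) = -1 by ring, rpow_neg_one]
  field_simp
  ring

theorem psiExp_eq (α : ℝ) (f : ℝ → ℝ) :
    psiExp α f = fun R => 1 / (4 * α) * ((∫ s in Ioi R, f s / s) + hardyOp (4 / α) f R) := by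
  ext R
  rw [psiExp, hardyOp]
  ring

theorem hasDerivAt_psiExp {α : ℝ} (hα : 0 < α) {f : ℝ → ℝ} (hf : Continuous f)
    (hfi : Integrable f) {R : ℝ} (hR : 0 < R) :
    HasDerivAt (psiExp α f) (-(1 / α ^ 2) * (hardyOp (4 / α) f R / R)) R := by
  have hF := hasDerivAt_integral_Ioi (half_lt_self hR)
    (integrableOn_div_self_Ioi (half_pos hR) hfi.integrableOn)
    (hf.continuousAt.div continuousAt_id hR.ne')
  rw [psiExp_eq]
  refine ((hF.fun_add (hasDerivAt_hardyOp (b := 4 / α) (by positivity) hf hR)).const_mul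
    (1 / (4 * α))).congr_deriv ?_
  generalize hardyOp (4 / α) f R = H
  field_simp
  ring

theorem deriv_psiExp {α : ℝ} (hα : 0 < α) {f : ℝ → ℝ} (hf : Continuous f) (hfi : Integrable f)
    {R : ℝ} (hR : 0 < R) :
    deriv (psiExp α f) R
      = -(1 / α ^ 2) * R ^ (-(4 / α) - 1) * ∫ s in Ioc (0:ℝ) R, s ^ (4 / α - 1) * f s := by
  rw [(hasDerivAt_psiExp hα hf hfi hR).deriv, hardyOp, rpow_sub_one hR.ne']
  ring

theorem deriv_psiExp_eqOn {α : ℝ} (hα : 0 < α) {f : ℝ → ℝ} (hf : Continuous f)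
    (hfi : Integrable f) :
    EqOn (deriv (psiExp α f)) (fun R => -(1 / α ^ 2) * (hardyOp (4 / α) f R / R)) (Ioi 0) :=
  fun _ hR => (hasDerivAt_psiExp hα hf hfi hR).deriv

theorem hasDerivAt_deriv_psiExp {α : ℝ} (hα : 0 < α) {f : ℝ → ℝ} (hf : Continuous f)
    (hfi : Integrable f) {R : ℝ} (hR : 0 < R) :
    HasDerivAt (deriv (psiExp α f))
      (1 / α ^ 2 * ((4 / α + 1) * hardyOp (4 / α) f R - f R) / R ^ 2) R := by
  have hφ := ((hasDerivAt_hardyOp (b := 4 / α) (by positivity) hf hR).fun_div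
    (hasDerivAt_id' R) hR.ne').const_mul (-(1 / α ^ 2))
  refine HasDerivAt.congr_of_eventuallyEq ?_
    (Filter.eventually_of_mem (Ioi_mem_nhds hR) (deriv_psiExp_eqOn hα hf hfi))
  refine hφ.congr_deriv ?_
  generalize hardyOp (4 / α) f R = H
  field_simp
  ring

theorem eLpNorm_mul_deriv_psiExp_le {α : ℝ} (hα : 0 < α) (hα8 : α < 8) {f : ℝ → ℝ}
    (hf : Continuous f) (hfi : Integrable f) :
    eLpNorm (fun R => R * deriv (psiExp α f) R) 2 (volume.restrict (Ioi 0))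
      ≤ ENNReal.ofReal (2 / (α * (8 - α))) * eLpNorm f 2 (volume.restrict (Ioi 0)) := by
  have hb : 1 / 2 < 4 / α := by rw [lt_div_iff₀ hα]; linarith
  have heq : (fun R => R * deriv (psiExp α f) R)
      =ᵐ[volume.restrict (Ioi 0)] (-(1 / α ^ 2)) • hardyOp (4 / α) f := by
    filter_upwards [ae_restrict_mem measurableSet_Ioi] with R (hR : 0 < R)
    rw [deriv_psiExp_eqOn hα hf hfi hR, Pi.smul_apply, smul_eq_mul]
    field_simp
  have hconst : 2 / (α * (8 - α)) = 1 / α ^ 2 * (1 / (4 / α - 1 / 2)) := by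
    rw [show 4 / α - 1 / 2 = (8 - α) / (2 * α) by field_simp; ring]
    have : 8 - α ≠ 0 := by linarith
    field_simp
  rw [eLpNorm_congr_ae heq, eLpNorm_const_smul, enorm_neg, enorm_of_nonneg (by positivity),
    hconst, ENNReal.ofReal_mul (by positivity), mul_assoc]
  gcongr
  exact eLpNorm_hardyOp_le hb hf.measurable

theorem eLpNorm_sq_mul_deriv_deriv_psiExp_le {α : ℝ} (hα : 0 < α) (hα8 : α < 8) {f : ℝ → ℝ}
    (hf : Continuous f) (hfi : Integrable f) :
    eLpNorm (fun R => R ^ 2 * deriv (deriv (psiExp α f)) R) 2 (volume.restrict (Ioi 0))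
      ≤ ENNReal.ofReal ((16 + α) / (α ^ 2 * (8 - α))) * eLpNorm f 2 (volume.restrict (Ioi 0)) := by
  have hb : 1 / 2 < 4 / α := by rw [lt_div_iff₀ hα]; linarith
  have heq : (fun R => R ^ 2 * deriv (deriv (psiExp α f)) R)
      =ᵐ[volume.restrict (Ioi 0)] (1 / α ^ 2) • ((4 / α + 1) • hardyOp (4 / α) f - f) := by
    filter_upwards [ae_restrict_mem measurableSet_Ioi] with R (hR : 0 < R)
    rw [(hasDerivAt_deriv_psiExp hα hf hfi hR).deriv]
    simp only [Pi.smul_apply, Pi.sub_apply, smul_eq_mul]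
    field_simp
  have hconst : (16 + α) / (α ^ 2 * (8 - α))
      = 1 / α ^ 2 * ((4 / α + 1) * (1 / (4 / α - 1 / 2)) + 1) := by
    rw [show 4 / α - 1 / 2 = (8 - α) / (2 * α) by field_simp; ring]
    have : 8 - α ≠ 0 := by linarith
    field_simp
    ring
  rw [eLpNorm_congr_ae heq, eLpNorm_const_smul, enorm_of_nonneg (by positivity), hconst,
    ENNReal.ofReal_mul (by positivity), mul_assoc]
  gcongr
  calc eLpNorm ((4 / α + 1) • hardyOp (4 / α) f - f) 2 (volume.restrict (Ioi 0))
      ≤ eLpNorm ((4 / α + 1) • hardyOp (4 / α) f) 2 (volume.restrict (Ioi 0))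
        + eLpNorm f 2 (volume.restrict (Ioi 0)) :=
        eLpNorm_sub_le ((measurable_hardyOp _ hf.measurable).const_smul _).aestronglyMeasurable
          hf.measurable.aestronglyMeasurable one_le_two
    _ ≤ ENNReal.ofReal (4 / α + 1) * (ENNReal.ofReal (1 / (4 / α - 1 / 2)) *
          eLpNorm f 2 (volume.restrict (Ioi 0))) + eLpNorm f 2 (volume.restrict (Ioi 0)) := by
        rw [eLpNorm_const_smul, enorm_of_nonneg (by positivity)]
        gcongr
        exact eLpNorm_hardyOp_le hb hf.measurable
    _ = _ := by
        rw [ENNReal.ofReal_add (mul_nonneg (by positivity) (one_div_nonneg.2 (by linarith)))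
          zero_le_one, ENNReal.ofReal_mul (by positivity), ENNReal.ofReal_one, add_mul, one_mul,
          mul_assoc]

theorem mul_sqrt_integral_sq_mul_deriv_psiExp_le {α : ℝ} (hα : 0 < α) (hα8 : α < 8)
    {f : ℝ → ℝ} (hf : Continuous f) (hfc : HasCompactSupport f) :
    α * √(∫ R in Ioi 0, (R * deriv (psiExp α f) R) ^ 2)
      ≤ 2 / (8 - α) * √(∫ s in Ioi 0, f s ^ 2) := by
  calc α * √(∫ R in Ioi 0, (R * deriv (psiExp α f) R) ^ 2)
      ≤ α * (2 / (α * (8 - α)) * √(∫ s in Ioi 0, f s ^ 2)) := by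
        gcongr
        exact sqrt_integral_sq_le_of_eLpNorm_le (div_nonneg zero_le_two (by nlinarith))
          (measurable_id.mul (measurable_deriv _)).aestronglyMeasurable
          ((hf.memLp_of_hasCompactSupport hfc).restrict _)
          (eLpNorm_mul_deriv_psiExp_le hα hα8 hf (hf.integrable_of_hasCompactSupport hfc))
    _ = 2 / (8 - α) * √(∫ s in Ioi 0, f s ^ 2) := by
        field_simp

theorem sq_mul_sqrt_integral_sq_mul_deriv_deriv_psiExp_le {α : ℝ} (hα : 0 < α) (hα8 : α < 8)
    {f : ℝ → ℝ} (hf : Continuous f) (hfc : HasCompactSupport f) :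
    α ^ 2 * √(∫ R in Ioi 0, (R ^ 2 * deriv (deriv (psiExp α f)) R) ^ 2)
      ≤ (16 + α) / (8 - α) * √(∫ s in Ioi 0, f s ^ 2) := by
  calc α ^ 2 * √(∫ R in Ioi 0, (R ^ 2 * deriv (deriv (psiExp α f)) R) ^ 2)
      ≤ α ^ 2 * ((16 + α) / (α ^ 2 * (8 - α)) * √(∫ s in Ioi 0, f s ^ 2)) := by
        gcongr
        exact sqrt_integral_sq_le_of_eLpNorm_le (div_nonneg (by linarith) (by nlinarith))
          ((measurable_id.pow_const 2).mul (measurable_deriv _)).aestronglyMeasurable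
          ((hf.memLp_of_hasCompactSupport hfc).restrict _)
          (eLpNorm_sq_mul_deriv_deriv_psiExp_le hα hα8 hf (hf.integrable_of_hasCompactSupport hfc))
    _ = (16 + α) / (8 - α) * √(∫ s in Ioi 0, f s ^ 2) := by
        field_simp

/-- **Key cancellation and elliptic estimates for the singular part of the stream
function:** (i) `ψ'(R) = −(1/α²) R^{−4/α−1} ∫₀^R s^{4/α−1} f(s) ds`, and
(ii) `α‖Rψ'‖_{L²} ≤ C‖f‖_{L²}` and `α²‖R²ψ''‖_{L²} ≤ C‖f‖_{L²}` with `C` absolute. -/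
theorem key_cancellation_and_elliptic_estimates :
    ∃ C : ℝ, 0 < C ∧
      ∀ α : ℝ, 0 < α → α ≤ 1 →
        ∀ f : ℝ → ℝ, Continuous f → HasCompactSupport f → tsupport f ⊆ Ioi 0 →
          (∀ R : ℝ, 0 < R →
            deriv (psiExp α f) R
              = -(1 / α ^ 2) * R ^ (-(4 / α) - 1) * ∫ s in Ioc (0:ℝ) R, s ^ (4 / α - 1) * f s) ∧
          α * Real.sqrt (∫ R in Ioi (0:ℝ), (R * deriv (psiExp α f) R) ^ 2)
            ≤ C * Real.sqrt (∫ s in Ioi (0:ℝ), f s ^ 2) ∧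
          α ^ 2 * Real.sqrt (∫ R in Ioi (0:ℝ), (R ^ 2 * deriv (deriv (psiExp α f)) R) ^ 2)
            ≤ C * Real.sqrt (∫ s in Ioi (0:ℝ), f s ^ 2) := by
  refine ⟨3, by norm_num, fun α hα hα1 f hf hfc _ => ⟨fun R hR => ?_, ?_, ?_⟩⟩
  · exact deriv_psiExp hα hf (hf.integrable_of_hasCompactSupport hfc) hR
  · refine (mul_sqrt_integral_sq_mul_deriv_psiExp_le hα (by linarith) hf hfc).trans ?_
    gcongr
    rw [div_le_iff₀ (by linarith)]
    linarith
  · refine (sq_mul_sqrt_integral_sq_mul_deriv_deriv_psiExp_le hα (by linarith) hf hfc).trans ?_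
    gcongr
    rw [div_le_iff₀ (by linarith)]
    linarith
end
end
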